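/- arXiv:math/0408060 — 2 statements merged into one kernel-verified Lean document; each statement's English description precedes it below -/
import Mathlib

section
/- For the finite-volume Abelian sandpile model on V ⊂ Z^d, the addition operators a_{x,V} restricted to the set R_V of recurrent configurations are bijections of R_V, and they commute: a_{x,V} a_{y,V} = a_{y,V} a_{x,V} on R_V for all x, y ∈ V. -/
/- The Abelian sandpile model on ℤ^d.  Sites are `Fin d → ℤ`; the toppling matrix is
`Δ_{xx} = 2d`, `Δ_{xy} = -1` for nearest neighbours, `0` otherwise.  Toppling in volume `V`
uses the matrix restricted to `V` (grains leaving `V` disappear).  `LegalSeq V η l η'`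
says that `l` is a sequence of legal topplings in `V` taking `η` to `η'`. -/

open scoped Classical

abbrev Site (d : ℕ) := Fin d → ℤ

def adjacent {d : ℕ} (x y : Site d) : Prop := (∑ i, |x i - y i|) = 1

noncomputable def lap (d : ℕ) (x y : Site d) : ℤ :=
  if x = y then 2 * d else if adjacent x y then -1 else 0

abbrev Config (d : ℕ) := Site d → ℤ

noncomputable def lapV {d : ℕ} (V : Finset (Site d)) (x y : Site d) : ℤ :=
  if x ∈ V ∧ y ∈ V then lap d x y else 0

noncomputable def topple {d : ℕ} (V : Finset (Site d)) (x : Site d) (η : Config d) :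
    Config d := fun y => η y - lapV V x y

def Stable {d : ℕ} (V : Finset (Site d)) (η : Config d) : Prop := ∀ x ∈ V, η x ≤ 2 * d

/-- `l` is a sequence of legal topplings in volume `V` carrying `η` to `η'`. -/
def LegalSeq {d : ℕ} (V : Finset (Site d)) : Config d → List (Site d) → Config d → Prop
  | η, [], η' => η' = η
  | η, x :: l, η' => x ∈ V ∧ (2 * d : ℤ) < η x ∧ LegalSeq V (topple V x η) l η'

noncomputable def addGrain {d : ℕ} (x : Site d) (η : Config d) : Config d :=
  fun y => if y = x then η y + 1 else η y


/-- `a` is a family of addition operators for the volume `V`: `a x η` is obtained from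
`η + δ_x` by a stabilizing sequence of legal topplings in `V`. -/
def IsAdditionOp {d : ℕ} (V : Finset (Site d)) (a : Site d → Config d → Config d) : Prop :=
  ∀ x ∈ V, ∀ η : Config d, Stable V η →
    ∃ l : List (Site d), LegalSeq V (addGrain x η) l (a x η) ∧ Stable V (a x η)

/-! Dhar's abelian property: toppling operators commute, and an unstable site stays unstable
when other sites topple, so it must occur in every stabilizing legal sequence and may be
toppled first. Hence all stabilizing legal sequences from a configuration end at the same
stable configuration, and `a x (a y η)`, `a y (a x η)` are both the stabilization of
`η + δ_x + δ_y`. Consequently every `a w` commutes with `a x` on stable configurations, so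
`a x` maps recurrent configurations to recurrent ones (periodicity under `a w` is transported,
and heights stay `≥ 1` because only sites of height `> 2d` topple). A self-map of a set on
which every point is periodic is a bijection of that set. -/

open Function Set

theorem Set.MapsTo.bijOn_of_subset_periodicPts {α : Type*} {f : α → α} {s : Set α}
    (hf : MapsTo f s s) (hper : s ⊆ periodicPts f) : BijOn f s s := by
  refine ⟨hf, (bijOn_periodicPts f).injOn.mono hper, fun x hx => ?_⟩
  obtain ⟨n, hn, hfix⟩ := hper hx
  obtain ⟨k, rfl⟩ := Nat.exists_eq_succ_of_ne_zero hn.ne'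
  exact ⟨f^[k] x, hf.iterate k hx, (iterate_succ_apply' f k x).symm.trans hfix⟩

theorem Set.MapsTo.iterate_apply_comm {α : Type*} {f g : α → α} {s : Set α}
    (hf : MapsTo f s s) (hcomm : ∀ z ∈ s, f (g z) = g (f z)) :
    ∀ n, ∀ z ∈ s, f^[n] (g z) = g (f^[n] z)
  | 0, _, _ => rfl
  | n + 1, z, hz => by
    rw [iterate_succ_apply, iterate_succ_apply, hcomm z hz,
      hf.iterate_apply_comm hcomm n (f z) (hf hz)]

section Sandpile

variable {d : ℕ} {V : Finset (Site d)}

theorem le_topple_apply_of_ne {x y : Site d} (h : x ≠ y) (η : Config d) :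
    η y ≤ topple V x η y := by
  have hlap : lapV V x y ≤ 0 := by
    unfold lapV lap
    split_ifs <;> simp_all
  simp only [topple]
  linarith

theorem topple_apply_self {x : Site d} (hx : x ∈ V) (η : Config d) :
    topple V x η x = η x - 2 * d := by
  simp [topple, lapV, lap, hx]

theorem topple_comm (x y : Site d) (η : Config d) :
    topple V x (topple V y η) = topple V y (topple V x η) := by
  funext z
  simp only [topple]
  ring

theorem le_addGrain_apply (x : Site d) (η : Config d) (y : Site d) :
    η y ≤ addGrain x η y := by
  unfold addGrain
  split <;> omega

theorem addGrain_comm (x y : Site d) (η : Config d) :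
    addGrain x (addGrain y η) = addGrain y (addGrain x η) := by
  funext z
  simp only [addGrain]
  split_ifs <;> rfl

theorem topple_addGrain (w x : Site d) (η : Config d) :
    topple V w (addGrain x η) = addGrain x (topple V w η) := by
  funext z
  by_cases h : z = x <;> simp [topple, addGrain, h]; ring

namespace LegalSeq

theorem addGrain (x : Site d) {η η' : Config d} {l : List (Site d)}
    (h : LegalSeq V η l η') : LegalSeq V (addGrain x η) l (addGrain x η') := by
  induction l generalizing η with
  | nil =>
    simp only [LegalSeq] at h ⊢
    rw [h]
  | cons w t ih =>
    obtain ⟨hwV, hw, hrest⟩ := h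
    refine ⟨hwV, hw.trans_le (le_addGrain_apply x η w), ?_⟩
    rw [topple_addGrain]
    exact ih hrest

theorem append {η η₁ η₂ : Config d} {l₁ l₂ : List (Site d)}
    (h₁ : LegalSeq V η l₁ η₁) (h₂ : LegalSeq V η₁ l₂ η₂) :
    LegalSeq V η (l₁ ++ l₂) η₂ := by
  induction l₁ generalizing η with
  | nil =>
    simp only [LegalSeq] at h₁
    subst h₁
    exact h₂
  | cons w t ih => exact ⟨h₁.1, h₁.2.1, ih h₁.2.2⟩

theorem mem_of_stable {η η' : Config d} {l : List (Site d)} (h : LegalSeq V η l η')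
    (hs : Stable V η') {z : Site d} (hz : z ∈ V) (hunst : (2 * d : ℤ) < η z) : z ∈ l := by
  induction l generalizing η with
  | nil =>
    simp only [LegalSeq] at h
    subst h
    exact absurd (hs z hz) hunst.not_ge
  | cons w t ih =>
    obtain ⟨-, -, hrest⟩ := h
    by_cases hwz : w = z
    · simp [hwz]
    · exact List.mem_cons_of_mem w (ih hrest (hunst.trans_le (le_topple_apply_of_ne hwz η)))

theorem erase {η η' : Config d} {l : List (Site d)} {z : Site d} (h : LegalSeq V η l η')
    (hzl : z ∈ l) (hzV : z ∈ V) (hunst : (2 * d : ℤ) < η z) :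
    LegalSeq V (topple V z η) (l.erase z) η' := by
  induction l generalizing η with
  | nil => simp at hzl
  | cons w t ih =>
    obtain ⟨hwV, hw, hrest⟩ := h
    by_cases hwz : w = z
    · subst hwz
      rwa [List.erase_cons_head]
    · have hzt : z ∈ t := (List.mem_cons.1 hzl).resolve_left (Ne.symm hwz)
      rw [List.erase_cons_tail (by simpa using hwz)]
      refine ⟨hwV, hw.trans_le (le_topple_apply_of_ne (Ne.symm hwz) η), ?_⟩
      rw [topple_comm]
      exact ih hrest hzt (hunst.trans_le (le_topple_apply_of_ne hwz η))

theorem eq_of_stable {η η₁ η₂ : Config d} {l₁ l₂ : List (Site d)}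
    (h₁ : LegalSeq V η l₁ η₁) (hs₁ : Stable V η₁)
    (h₂ : LegalSeq V η l₂ η₂) (hs₂ : Stable V η₂) : η₁ = η₂ := by
  induction l₁ generalizing η l₂ with
  | nil =>
    simp only [LegalSeq] at h₁
    subst h₁
    cases l₂ with
    | nil => exact h₂.symm
    | cons w t => exact absurd (hs₁ w h₂.1) h₂.2.1.not_ge
  | cons w t ih =>
    obtain ⟨hwV, hw, hrest⟩ := h₁
    exact ih hrest (h₂.erase (h₂.mem_of_stable hs₂ hwV hw) hwV hw)

theorem one_le {η η' : Config d} {l : List (Site d)} (h : LegalSeq V η l η')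
    (hpos : ∀ z ∈ V, 1 ≤ η z) : ∀ z ∈ V, 1 ≤ η' z := by
  induction l generalizing η with
  | nil =>
    simp only [LegalSeq] at h
    subst h
    exact hpos
  | cons w t ih =>
    obtain ⟨hwV, hw, hrest⟩ := h
    refine ih hrest fun z hz => ?_
    by_cases hzw : z = w
    · subst hzw
      rw [topple_apply_self hwV]
      omega
    · exact (hpos z hz).trans (le_topple_apply_of_ne (Ne.symm hzw) η)

end LegalSeq

namespace IsAdditionOp

variable {a : Site d → Config d → Config d}

theorem mapsTo_stable (ha : IsAdditionOp V a) {x : Site d} (hx : x ∈ V) :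
    MapsTo (a x) {η | Stable V η} {η | Stable V η} :=
  fun η hη => (ha x hx η hη).choose_spec.2

theorem comm (ha : IsAdditionOp V a) {x y : Site d} (hx : x ∈ V) (hy : y ∈ V)
    {η : Config d} (hη : Stable V η) : a x (a y η) = a y (a x η) := by
  obtain ⟨ly, hly, hsy⟩ := ha y hy η hη
  obtain ⟨lxy, hlxy, hsxy⟩ := ha x hx (a y η) hsy
  obtain ⟨lx, hlx, hsx⟩ := ha x hx η hη
  obtain ⟨lyx, hlyx, hsyx⟩ := ha y hy (a x η) hsx
  have hxy : LegalSeq V (addGrain x (addGrain y η)) (ly ++ lxy) (a x (a y η)) :=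
    (hly.addGrain x).append hlxy
  have hyx : LegalSeq V (addGrain x (addGrain y η)) (lx ++ lyx) (a y (a x η)) := by
    rw [addGrain_comm]
    exact (hlx.addGrain y).append hlyx
  exact hxy.eq_of_stable hsxy hyx hsyx

end IsAdditionOp

def recurrentSet (V : Finset (Site d)) (a : Site d → Config d → Config d) : Set (Config d) :=
  {η | (∀ z ∈ V, (1:ℤ) ≤ η z ∧ η z ≤ (2 * d : ℤ)) ∧
    ∀ x ∈ V, ∃ n : ℕ, 1 ≤ n ∧ (a x)^[n] η = η}

variable {a : Site d → Config d → Config d}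

theorem stable_of_mem_recurrentSet {η : Config d} (hη : η ∈ recurrentSet V a) : Stable V η :=
  fun z hz => (hη.1 z hz).2

theorem recurrentSet_subset_periodicPts {x : Site d} (hx : x ∈ V) :
    recurrentSet V a ⊆ periodicPts (a x) :=
  fun _ hη => hη.2 x hx

theorem IsAdditionOp.mapsTo_recurrentSet (ha : IsAdditionOp V a) {x : Site d} (hx : x ∈ V) :
    MapsTo (a x) (recurrentSet V a) (recurrentSet V a) := by
  intro η hη
  have hstable : Stable V η := stable_of_mem_recurrentSet hη
  obtain ⟨l, hl, hs⟩ := ha x hx η hstable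
  have hpos : ∀ z ∈ V, 1 ≤ a x η z :=
    hl.one_le fun z hz => (hη.1 z hz).1.trans (le_addGrain_apply x η z)
  refine ⟨fun z hz => ⟨hpos z hz, hs z hz⟩, fun w hw => ?_⟩
  obtain ⟨n, hn, hfix⟩ := hη.2 w hw
  have hcomm : (a w)^[n] (a x η) = a x ((a w)^[n] η) :=
    (ha.mapsTo_stable hw).iterate_apply_comm (g := a x) (fun _ hζ => ha.comm hw hx hζ)
      n η hstable
  exact ⟨n, hn, by rw [hcomm, hfix]⟩

end Sandpile

/-- the addition operators `a_{x,V}` restricted to the set `R_V` of recurrent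
configurations (stable configurations with heights in `{1,…,2d}` on `V` such that for every
`x ∈ V` some positive power of `a_{x,V}` fixes them) are bijections of `R_V`, and they
commute on `R_V`. -/
theorem addition_operators_bijective_and_commute
    {d : ℕ} (V : Finset (Site d)) (a : Site d → Config d → Config d)
    (ha : IsAdditionOp V a)
    (R : Set (Config d))
    (hR : R = {η | (∀ z ∈ V, (1:ℤ) ≤ η z ∧ η z ≤ (2 * d : ℤ)) ∧
                   ∀ x ∈ V, ∃ n : ℕ, 1 ≤ n ∧ (a x)^[n] η = η})
    (x y : Site d) (hx : x ∈ V) (hy : y ∈ V) :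
    Set.BijOn (a x) R R ∧ ∀ η ∈ R, a x (a y η) = a y (a x η) := by
  obtain rfl : R = recurrentSet V a := hR
  exact ⟨(ha.mapsTo_recurrentSet hx).bijOn_of_subset_periodicPts
      (recurrentSet_subset_periodicPts hx),
    fun η hη => ha.comm hx hy (stable_of_mem_recurrentSet hη)⟩
end

section
/- Dhar's formula: for the Abelian sandpile model on finite V ⊂ Z^d, with μ_V the uniform measure on recurrent configurations R_V and N_V(x,y,η) the number of topplings at y when a grain is added at x to η and the result is stabilized, one has E_{μ_V}[N_V(x,y,·)] = (Δ_V^{-1})_{xy}. -/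
/- The Abelian sandpile model on ℤ^d.  Sites are `Fin d → ℤ`; the toppling matrix is
`Δ_{xx} = 2d`, `Δ_{xy} = -1` for nearest neighbours, `0` otherwise.  Toppling in volume `V`
uses the matrix restricted to `V` (grains leaving `V` disappear).  `LegalSeq V η l η'`
says that `l` is a sequence of legal topplings in `V` taking `η` to `η'`. -/

open scoped Classical

/-- The height (in `{1,…,2d}`) of a configuration encoded with values in `Fin (2d)`. -/
def heightOf {d : ℕ} {V : Finset (Site d)} (η : {x // x ∈ V} → Fin (2 * d))
    (z : {x // x ∈ V}) : ℤ := (η z : ℤ) + 1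

/-- A configuration on `V` is recurrent iff it contains no forbidden subconfiguration. -/
def RecurrentOn {d : ℕ} (V : Finset (Site d)) (η : {x // x ∈ V} → Fin (2 * d)) : Prop :=
  ∀ S : Finset {x // x ∈ V}, S.Nonempty →
    ∃ x ∈ S, ¬ (heightOf η x ≤ -∑ y ∈ S.erase x, lap d x.1 y.1)

/-- Extend a configuration on `V` (heights in `{1,…,2d}`) to a configuration on all of `ℤ^d`. -/
noncomputable def toConfig {d : ℕ} {V : Finset (Site d)}
    (η : {x // x ∈ V} → Fin (2 * d)) : Config d :=
  fun z => if h : z ∈ V then (η ⟨z, h⟩ : ℤ) + 1 else 0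

/-- The toppling matrix restricted to `V`, over `ℝ`. -/
noncomputable def lapMatR {d : ℕ} (V : Finset (Site d)) :
    Matrix {x // x ∈ V} {x // x ∈ V} ℝ := fun a b => ((lap d a.1 b.1 : ℤ) : ℝ)

/-! The addition operator `a_x` (add a grain at `x`, stabilize) permutes the recurrent
configurations. By pigeonhole some orbit of `a_x` closes up, which yields `m ≥ 0` with
`m Δ_V = k e_x`; then for every recurrent `η` the least action principle, together with a
level-set argument against forbidden subconfigurations, shows `a_x^k η = η`. Since
`a_x η = η + e_x - N(x,·,η) Δ_V`, summing over `R_V` gives `(∑_η N(x,·,η)) Δ_V = |R_V| e_x`,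
and `Δ_V` is invertible by the discrete minimum principle. -/

open Finset Matrix

section Lattice

variable {d : ℕ}

theorem adjacent_comm {x y : Site d} : adjacent x y ↔ adjacent y x := by
  simp only [adjacent, abs_sub_comm]

theorem not_adjacent_self (x : Site d) : ¬ adjacent x x := by
  simp [adjacent]

theorem lap_self (x : Site d) : lap d x x = 2 * d := by
  simp [lap]

theorem lap_of_ne {x y : Site d} (h : x ≠ y) : lap d x y = if adjacent x y then -1 else 0 := by
  simp [lap, h]

theorem lap_comm (x y : Site d) : lap d x y = lap d y x := by
  simp only [lap, eq_comm (a := x), adjacent_comm (x := x)]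

theorem lap_nonpos_of_ne {x y : Site d} (h : x ≠ y) : lap d x y ≤ 0 := by
  rw [lap_of_ne h]; split_ifs <;> norm_num

/-- `neighbor z (i, true) = z + e_i` and `neighbor z (i, false) = z - e_i`. -/
def neighbor (z : Site d) (p : Fin d × Bool) : Site d :=
  Function.update z p.1 (z p.1 + if p.2 then 1 else -1)

def neighbors (z : Site d) : Finset (Site d) := univ.image (neighbor z)

theorem neighbor_injective (z : Site d) : Function.Injective (neighbor z) := by
  rintro ⟨i, b⟩ ⟨j, c⟩ h
  by_cases hij : i = j
  · subst hij
    have := congrFun h i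
    cases b <;> cases c <;> simp_all [neighbor]
  · have := congrFun h i
    cases b <;> simp [neighbor, Function.update_of_ne hij] at this

theorem card_neighbors (z : Site d) : #(neighbors z) = 2 * d := by
  rw [neighbors, card_image_of_injective _ (neighbor_injective z)]
  simp [mul_comm]

theorem adjacent_iff_mem_neighbors {z w : Site d} : adjacent z w ↔ w ∈ neighbors z := by
  simp only [neighbors, mem_image, mem_univ, true_and]
  constructor
  · intro h
    have hnonneg : ∀ k ∈ univ, 0 ≤ |z k - w k| := fun k _ => abs_nonneg _
    obtain ⟨i, hi⟩ : ∃ i, z i ≠ w i := by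
      by_contra! hzw
      simp [adjacent, hzw] at h
    have hone : |z i - w i| = 1 := by
      have := single_le_sum hnonneg (mem_univ i)
      have := abs_pos.2 (sub_ne_zero.2 hi)
      unfold adjacent at h
      omega
    have hrest : ∀ k ≠ i, z k = w k := by
      intro k hk
      rw [adjacent, ← add_sum_erase _ _ (mem_univ i), hone, add_eq_left,
        sum_eq_zero_iff_of_nonneg (fun k _ => abs_nonneg _)] at h
      simpa [sub_eq_zero] using h k (mem_erase.2 ⟨hk, mem_univ k⟩)
    refine ⟨(i, decide (z i < w i)), funext fun k => ?_⟩
    by_cases hk : k = i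
    · subst hk
      rcases abs_eq (zero_le_one' ℤ) |>.1 hone with h' | h' <;>
        simp [neighbor] <;> split_ifs <;> omega
    · simp [neighbor, Function.update_of_ne hk, hrest k hk]
  · rintro ⟨⟨i, b⟩, rfl⟩
    rw [adjacent, sum_eq_single i]
    · cases b <;> simp [neighbor]
    · intro k _ hk
      simp [neighbor, Function.update_of_ne hk]
    · simp

theorem card_filter_adjacent_le (z : Site d) (A : Finset (Site d)) :
    #{w ∈ A | adjacent z w} ≤ 2 * d := by
  rw [← card_neighbors z]
  exact card_le_card fun w hw => adjacent_iff_mem_neighbors.1 (mem_filter.1 hw).2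

theorem card_filter_adjacent_lt {z : Site d} {A : Finset (Site d)} {p : Fin d × Bool}
    (hp : neighbor z p ∉ A) : #{w ∈ A | adjacent z w} < 2 * d := by
  rw [← card_neighbors z]
  refine card_lt_card ⟨fun w hw => adjacent_iff_mem_neighbors.1 (mem_filter.1 hw).2, ?_⟩
  exact not_subset.2 ⟨neighbor z p, mem_image_of_mem _ (mem_univ p), fun h => hp (mem_filter.1 h).1⟩

theorem exists_neighbor_notMem (i : Fin d) {S : Finset (Site d)} (hS : S.Nonempty) :
    ∃ z ∈ S, neighbor z (i, true) ∉ S := by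
  obtain ⟨z, hz, hmax⟩ := S.exists_max_image (· i) hS
  exact ⟨z, hz, fun h => by simpa [neighbor] using hmax _ h⟩

theorem sum_lap_mul_of_notMem {R : Type*} [CommRing R] {z : Site d} {A : Finset (Site d)}
    (hz : z ∉ A) (c : Site d → R) :
    ∑ w ∈ A, (lap d z w : R) * c w = -∑ w ∈ A with adjacent z w, c w := by
  rw [sum_filter, ← sum_neg_distrib]
  refine sum_congr rfl fun w hw => ?_
  rw [lap_of_ne (by rintro rfl; exact hz hw)]
  split_ifs <;> simp

theorem sum_lap_mul_of_mem {R : Type*} [CommRing R] {z : Site d} {A : Finset (Site d)}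
    (hz : z ∈ A) (c : Site d → R) :
    ∑ w ∈ A, (lap d z w : R) * c w = 2 * d * c z - ∑ w ∈ A with adjacent z w, c w := by
  rw [← add_sum_erase _ _ hz, sum_lap_mul_of_notMem (notMem_erase z A), filter_erase,
    erase_eq_of_notMem (by simp [not_adjacent_self]), lap_self]
  push_cast
  ring

theorem neg_sum_erase_lap (z : Site d) (A : Finset (Site d)) :
    -∑ w ∈ A.erase z, lap d z w = #{w ∈ A | adjacent z w} := by
  have := sum_lap_mul_of_notMem (R := ℤ) (notMem_erase z A) 1
  simp only [Int.cast_id, Pi.one_apply, mul_one, sum_const] at this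
  rw [this, filter_erase, erase_eq_of_notMem (by simp [not_adjacent_self])]
  simp

theorem sum_filter_adjacent_eq_sum_neighbors {M : Type*} [AddCommMonoid M] {V : Finset (Site d)}
    {c : Site d → M} (hc : ∀ w ∉ V, c w = 0) (z : Site d) :
    ∑ w ∈ V with adjacent z w, c w = ∑ w ∈ neighbors z, c w := by
  refine sum_subset (fun w hw => adjacent_iff_mem_neighbors.1 (mem_filter.1 hw).2)
    fun w hw hwV => hc w fun h => hwV (mem_filter.2 ⟨h, adjacent_iff_mem_neighbors.2 hw⟩)

end Lattice

section MinimumPrinciple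

variable {d : ℕ} {F : Type*} [Field F] [LinearOrder F] [IsStrictOrderedRing F]

theorem nonneg_of_sum_lap_mul_nonneg (i : Fin d) {V : Finset (Site d)} {v : Site d → F}
    (hv : ∀ z ∉ V, v z = 0) (hΔ : ∀ z ∈ V, 0 ≤ ∑ w ∈ V, (lap d z w : F) * v w) (z : Site d) :
    0 ≤ v z := by
  by_contra! hz
  have hzV : z ∈ V := by_contra fun h => (hv z h ▸ hz).false
  obtain ⟨z₀, hz₀V, hmin⟩ := V.exists_min_image v ⟨z, hzV⟩
  have hneg : v z₀ < 0 := (hmin z hzV).trans_lt hz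
  have hge : ∀ w, v z₀ ≤ v w := fun w => by
    by_cases hw : w ∈ V
    · exact hmin w hw
    · exact hv w hw ▸ hneg.le
  -- Some `t` in the minimum set `T` has its upper neighbour in direction `i` outside `T`, but
  -- superharmonicity forces every neighbour of `t` to take the minimum value.
  let T := {w ∈ V | v w = v z₀}
  obtain ⟨t, ht, hnot⟩ := exists_neighbor_notMem i ⟨z₀, mem_filter.2 ⟨hz₀V, rfl⟩⟩ (S := T)
  obtain ⟨htV, hvt⟩ := mem_filter.1 ht
  have hsum : ∑ w ∈ neighbors t, v w ≤ ∑ _w ∈ neighbors t, v z₀ := by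
    have := hΔ t htV
    rw [sum_lap_mul_of_mem htV, sum_filter_adjacent_eq_sum_neighbors hv] at this
    simpa [card_neighbors, hvt] using this
  have hnbr := (sum_eq_sum_iff_of_le fun w _ => hge w).1
    (le_antisymm (sum_le_sum fun w _ => hge w) hsum) _ (mem_image_of_mem _ (mem_univ (i, true)))
  refine hnot (mem_filter.2 ⟨by_contra fun h => ?_, hnbr.symm⟩)
  rw [hv _ h] at hnbr
  exact hneg.ne hnbr

end MinimumPrinciple

theorem lapMatR_det_ne_zero {d : ℕ} (i : Fin d) (V : Finset (Site d)) : (lapMatR V).det ≠ 0 := by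
  intro hdet
  obtain ⟨v, hv0, hv⟩ := Matrix.exists_mulVec_eq_zero_iff.2 hdet
  let f : Site d → ℝ := fun z => if h : z ∈ V then v ⟨z, h⟩ else 0
  have hf : ∀ z ∉ V, f z = 0 := fun z hz => dif_neg hz
  have hΔ : ∀ z ∈ V, ∑ w ∈ V, (lap d z w : ℝ) * f w = 0 := fun z hz => by
    rw [← sum_coe_sort V]
    simpa [f, lapMatR, Matrix.mulVec, dotProduct] using congrFun hv ⟨z, hz⟩
  have hzero : ∀ z, f z = 0 := fun z => le_antisymm
    (neg_nonneg.1 (nonneg_of_sum_lap_mul_nonneg i (v := -f) (by simpa using hf)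
      (fun z hz => by simp [hΔ z hz]) z))
    (nonneg_of_sum_lap_mul_nonneg i hf (fun z hz => (hΔ z hz).ge) z)
  exact hv0 (funext fun a => by simpa [f] using hzero a)

section Toppling

variable {d : ℕ} {V : Finset (Site d)}

/-- `lapVecMul V n = n ᵥ* Δ_V` is what a configuration loses when every site `w` topples
`n w` times. -/
noncomputable def lapVecMul (V : Finset (Site d)) : (Site d → ℤ) →+ Config d where
  toFun n z := ∑ w ∈ V, n w * lapV V w z
  map_zero' := by ext; simp
  map_add' n n' := by ext; simp [add_mul, sum_add_distrib]

theorem lapVecMul_apply_of_mem {z : Site d} (hz : z ∈ V) (n : Site d → ℤ) :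
    lapVecMul V n z = ∑ w ∈ V, lap d z w * n w :=
  sum_congr rfl fun w hw => by rw [lapV, if_pos ⟨hw, hz⟩, lap_comm, mul_comm]

theorem lapVecMul_apply_of_notMem {z : Site d} (hz : z ∉ V) (n : Site d → ℤ) :
    lapVecMul V n z = 0 :=
  sum_eq_zero fun w _ => by simp [lapV, hz]

theorem lapVecMul_eq_zero {n : Site d → ℤ} (hn : ∀ w ∈ V, n w = 0) : lapVecMul V n = 0 :=
  funext fun _ => sum_eq_zero fun w hw => by simp [hn w hw]

theorem topple_eq_sub (a : Site d) (η : Config d) :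
    topple V a η = η - lapVecMul V (Pi.single a 1) := by
  funext z
  simp only [topple, lapVecMul, AddMonoidHom.coe_mk, ZeroHom.coe_mk, Pi.sub_apply]
  rw [sum_eq_single a (fun w _ hw => by simp [hw]) (fun ha => by simp [lapV, ha])]
  simp

theorem topple_add (a : Site d) (η c : Config d) : topple V a (η + c) = topple V a η + c := by
  funext z
  simp only [topple, Pi.add_apply]
  ring

theorem addGrain_eq_add (x : Site d) (η : Config d) : addGrain x η = η + Pi.single x 1 := by
  funext z
  by_cases h : z = x <;> simp [addGrain, h]

namespace LegalSeq

variable {η ξ ζ : Config d} {l l' : List (Site d)}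

theorem eq_sub_lapVecMul (h : LegalSeq V η l ξ) :
    ξ = η - lapVecMul V (fun w => (l.count w : ℤ)) := by
  induction l generalizing η with
  | nil => simpa [LegalSeq, ← Pi.zero_def] using h
  | cons a l ih =>
    rw [ih h.2.2, topple_eq_sub, sub_sub, ← map_add]
    congr 2
    funext w
    simp [List.count_cons, Pi.single_apply, eq_comm (a := w), add_comm]

theorem append_s4 (h : LegalSeq V η l ξ) (h' : LegalSeq V ξ l' ζ) : LegalSeq V η (l ++ l') ζ := by
  induction l generalizing η with
  | nil => exact (show ξ = η from h) ▸ h'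
  | cons a l ih => exact ⟨h.1, h.2.1, ih h.2.2⟩

theorem add_right (h : LegalSeq V η l ξ) {c : Config d} (hc : 0 ≤ c) :
    LegalSeq V (η + c) l (ξ + c) := by
  induction l generalizing η with
  | nil => exact congrArg (· + c) (show ξ = η from h)
  | cons a l ih =>
    refine ⟨h.1, h.2.1.trans_le (le_add_of_nonneg_right (hc a)), ?_⟩
    rw [topple_add]
    exact ih h.2.2

theorem count_le (h : LegalSeq V η l ξ) {n : Site d → ℤ} (hn : 0 ≤ n)
    (hs : Stable V (η - lapVecMul V n)) (z : Site d) : (l.count z : ℤ) ≤ n z := by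
  induction l generalizing η n with
  | nil => simpa using hn z
  | cons a l ih =>
    obtain ⟨haV, hunstable, hl⟩ := h
    -- A site that never topples can only gain grains, so `a` must topple at least once.
    have ha : 1 ≤ n a := by
      by_contra! ha
      have hna : n a = 0 := le_antisymm (by omega) (hn a)
      have hgain : 0 ≤ ∑ w ∈ V with adjacent a w, n w := sum_nonneg fun w _ => hn w
      have := hs a haV
      have hsum := sum_lap_mul_of_mem (R := ℤ) haV n
      simp only [Int.cast_id] at hsum
      rw [Pi.sub_apply, lapVecMul_apply_of_mem haV, hsum, hna, mul_zero, zero_sub,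
        sub_neg_eq_add] at this
      omega
    have hn' : 0 ≤ n - Pi.single a 1 := fun w => by
      by_cases hw : w = a
      · subst hw; simpa using ha
      · simpa [hw] using hn w
    have := ih hl hn' (by rwa [topple_eq_sub, map_sub, sub_sub, add_sub_cancel])
    by_cases hz : z = a
    · subst hz
      simp only [Pi.sub_apply, Pi.single_eq_same, List.count_cons_self, Nat.cast_add,
        Nat.cast_one] at this ⊢
      omega
    · simpa [List.count_cons, hz, Ne.symm hz] using this

end LegalSeq

end Toppling

section Allowed

variable {d : ℕ} {V : Finset (Site d)}

/-- `η` contains no forbidden subconfiguration in `V`: every nonempty `S ⊆ V` has a site whose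
height exceeds its number of neighbours in `S` (see `neg_sum_erase_lap`). -/
def Allowed (V : Finset (Site d)) (η : Config d) : Prop :=
  ∀ S ⊆ V, S.Nonempty → ∃ z ∈ S, -∑ w ∈ S.erase z, lap d z w < η z

theorem Allowed.mono {η η' : Config d} (h : Allowed V η) (hle : η ≤ η') : Allowed V η' :=
  fun S hS hne => (h S hS hne).imp fun z ⟨hz, hlt⟩ => ⟨hz, hlt.trans_le (hle z)⟩

theorem Allowed.one_le {η : Config d} (h : Allowed V η) {z : Site d} (hz : z ∈ V) : 1 ≤ η z := by
  obtain ⟨w, hw, hlt⟩ := h {z} (singleton_subset_iff.2 hz) (singleton_nonempty z)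
  rw [mem_singleton.1 hw] at hlt
  simp only [erase_singleton, sum_empty, neg_zero] at hlt
  omega

theorem Allowed.topple {η : Config d} (h : Allowed V η) {a : Site d} (ha : a ∈ V)
    (hunstable : 2 * d < η a) : Allowed V (topple V a η) := by
  intro S hS hne
  by_cases haS : a ∈ S
  swap
  · refine (h S hS hne).imp fun z ⟨hz, hlt⟩ => ⟨hz, hlt.trans_le ?_⟩
    have : lapV V a z ≤ 0 := by
      unfold lapV; split_ifs
      exacts [lap_nonpos_of_ne (by rintro rfl; exact haS hz), le_rfl]
    simp only [_root_.topple]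
    omega
  rcases (S.erase a).eq_empty_or_nonempty with hSa | hSa
  · refine ⟨a, haS, ?_⟩
    simp [hSa, _root_.topple, lapV, ha, lap_self, hunstable]
  -- Toppling `a` gives each `z ≠ a` exactly the grain `-lap z a` that `a` adds to its sum.
  obtain ⟨z, hz, hlt⟩ := h _ ((erase_subset a S).trans hS) hSa
  have hza : z ≠ a := ne_of_mem_erase hz
  refine ⟨z, mem_of_mem_erase hz, ?_⟩
  rw [← add_sum_erase _ _ (mem_erase.2 ⟨hza.symm, haS⟩), erase_right_comm]
  simp only [_root_.topple, lapV, if_pos (And.intro ha (hS (mem_of_mem_erase hz))), lap_comm a z]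
  omega

theorem LegalSeq.allowed {η ξ : Config d} {l : List (Site d)} (h : LegalSeq V η l ξ)
    (hη : Allowed V η) : Allowed V ξ := by
  induction l generalizing η with
  | nil => exact (show ξ = η from h) ▸ hη
  | cons a l ih => exact ih h.2.2 (hη.topple h.1 h.2.1)

/-- Let `U ≥ 1` be the maximum of `u` and `S` its level set. As `η` is allowed, some `z ∈ S` has
more grains than neighbours in `S`, while `(u ᵥ* Δ_V) z ≥ 2dU - ∑_{w ~ z} u w` is at least the
number of its neighbours outside `S`; so `z` ends up with more than `2d` grains. -/
theorem Allowed.eq_zero_of_stable_add {η : Config d} (hη : Allowed V η) {u : Site d → ℤ}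
    (hu : ∀ w ∈ V, 0 ≤ u w) (hs : Stable V (η + lapVecMul V u)) : ∀ w ∈ V, u w = 0 := by
  by_contra! hne
  obtain ⟨w₀, hw₀V, hw₀⟩ := hne
  obtain ⟨z₀, hz₀V, hmax⟩ := V.exists_max_image u ⟨w₀, hw₀V⟩
  set U := u z₀
  have hU : 1 ≤ U := by have := hmax w₀ hw₀V; have := hu w₀ hw₀V; omega
  obtain ⟨z, hzS, hlt⟩ := hη {w ∈ V | u w = U} (filter_subset _ _) ⟨z₀, mem_filter.2 ⟨hz₀V, rfl⟩⟩
  obtain ⟨hzV, hzU⟩ := mem_filter.1 hzS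
  set F := {w ∈ V | adjacent z w}
  have hlevel : #{w ∈ V | u w = U ∧ adjacent z w} = #{w ∈ F | u w = U} := by
    simp only [F, filter_filter, and_comm]
  rw [neg_sum_erase_lap, filter_filter, hlevel] at hlt
  have hbound : ∑ w ∈ F, u w ≤ ∑ w ∈ F, (U - if ¬u w = U then 1 else 0) :=
    sum_le_sum fun w hw => by
      have := hmax w (mem_filter.1 hw).1
      split_ifs <;> omega
  rw [sum_sub_distrib, sum_const, nsmul_eq_mul, sum_boole] at hbound
  have hsplit := card_filter_add_card_filter_not (s := F) (fun w => u w = U)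
  have hF : #F ≤ 2 * d := card_filter_adjacent_le z V
  have hsum := sum_lap_mul_of_mem (R := ℤ) hzV u
  simp only [Int.cast_id, hzU] at hsum
  have := hs z hzV
  rw [Pi.add_apply, lapVecMul_apply_of_mem hzV, hsum] at this
  have hsplit' : (#{w ∈ F | u w = U} : ℤ) + #{w ∈ F | ¬u w = U} = #F := by
    exact_mod_cast hsplit
  nlinarith

end Allowed

section Recurrent

variable {d : ℕ} {V : Finset (Site d)}

theorem toConfig_of_mem (η : {x // x ∈ V} → Fin (2 * d)) {z : Site d} (hz : z ∈ V) :
    toConfig η z = (η ⟨z, hz⟩ : ℤ) + 1 :=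
  dif_pos hz

theorem toConfig_of_notMem (η : {x // x ∈ V} → Fin (2 * d)) {z : Site d} (hz : z ∉ V) :
    toConfig η z = 0 :=
  dif_neg hz

theorem toConfig_coe (η : {x // x ∈ V} → Fin (2 * d)) (z : {x // x ∈ V}) :
    toConfig η z = heightOf η z :=
  dif_pos z.2

theorem stable_toConfig (η : {x // x ∈ V} → Fin (2 * d)) : Stable V (toConfig η) := fun z hz => by
  have := (η ⟨z, hz⟩).isLt
  rw [toConfig_of_mem η hz]
  omega

theorem toConfig_injective : Function.Injective (toConfig (d := d) (V := V)) := fun η η' h =>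
  funext fun z => Fin.ext <| by
    have := congrFun h z
    rw [toConfig_coe, toConfig_coe, heightOf, heightOf] at this
    omega

theorem exists_toConfig_eq {ξ : Config d} (hpos : ∀ z ∈ V, 1 ≤ ξ z) (hs : Stable V ξ)
    (hout : ∀ z ∉ V, ξ z = 0) : ∃ η : {x // x ∈ V} → Fin (2 * d), toConfig η = ξ := by
  refine ⟨fun z => ⟨(ξ z - 1).toNat, by have := hs z z.2; have := hpos z z.2; omega⟩,
    funext fun z => ?_⟩
  by_cases hz : z ∈ V
  · have := hpos z hz
    rw [toConfig_of_mem _ hz]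
    simp only
    omega
  · rw [toConfig_of_notMem _ hz, hout z hz]

theorem recurrentOn_iff_allowed (η : {x // x ∈ V} → Fin (2 * d)) :
    RecurrentOn V η ↔ Allowed V (toConfig η) := by
  let ι := Function.Embedding.subtype (· ∈ V)
  have key : ∀ S : Finset {x // x ∈ V},
      (∃ z ∈ S, ¬heightOf η z ≤ -∑ y ∈ S.erase z, lap d z.1 y.1) ↔
        ∃ z ∈ S.map ι, -∑ w ∈ (S.map ι).erase z, lap d z w < toConfig η z := by
    intro S
    have hsum : ∀ z, ∑ w ∈ (S.map ι).erase (ι z), lap d (ι z) w = ∑ y ∈ S.erase z, lap d z y :=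
      fun z => by rw [← map_erase, sum_map]; rfl
    have hheight : ∀ z, toConfig η (ι z) = heightOf η z := toConfig_coe η
    constructor
    · rintro ⟨z, hz, hlt⟩
      exact ⟨ι z, mem_map_of_mem ι hz, by rw [hsum, hheight]; exact not_le.1 hlt⟩
    · rintro ⟨w, hw, hlt⟩
      obtain ⟨z, hz, rfl⟩ := mem_map.1 hw
      rw [hsum, hheight] at hlt
      exact ⟨z, hz, not_le.2 hlt⟩
  constructor
  · intro h S hS hne
    rw [← subtype_map_of_mem hS]
    exact (key _).1 (h _ (map_nonempty.1 (by rwa [subtype_map_of_mem hS])))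
  · intro h S hne
    refine (key S).2 (h _ (fun w hw => ?_) (map_nonempty.2 hne))
    obtain ⟨z, -, rfl⟩ := mem_map.1 hw
    exact z.2

/-- The maximal configuration, of height `2d` everywhere, is recurrent. -/
theorem exists_recurrentOn (i : Fin d) (V : Finset (Site d)) :
    ∃ η : {x // x ∈ V} → Fin (2 * d), RecurrentOn V η := by
  refine ⟨fun _ => ⟨2 * d - 1, by have := i.pos; omega⟩, (recurrentOn_iff_allowed _).2 ?_⟩
  intro S hS hne
  obtain ⟨z, hz, hnot⟩ := exists_neighbor_notMem i hne
  refine ⟨z, hz, ?_⟩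
  rw [neg_sum_erase_lap, toConfig_of_mem _ (hS hz)]
  have := card_filter_adjacent_lt (A := S) hnot
  have := i.pos
  simp only
  omega

end Recurrent

section AdditionOperator

variable {d : ℕ} {V : Finset (Site d)} {x : Site d}

/-- `φ` agrees with the addition operator `a_x` on recurrent configurations. -/
def IsAdditionOperator (V : Finset (Site d)) (x : Site d)
    (φ : ({z // z ∈ V} → Fin (2 * d)) → {z // z ∈ V} → Fin (2 * d)) : Prop :=
  ∀ η, RecurrentOn V η →
    RecurrentOn V (φ η) ∧ ∃ l, LegalSeq V (addGrain x (toConfig η)) l (toConfig (φ η))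

namespace IsAdditionOperator

variable {φ : ({z // z ∈ V} → Fin (2 * d)) → {z // z ∈ V} → Fin (2 * d)}

theorem iterate (hφ : IsAdditionOperator V x φ) {η : {z // z ∈ V} → Fin (2 * d)}
    (hη : RecurrentOn V η) (k : ℕ) :
    RecurrentOn V (φ^[k] η) ∧
      ∃ l, LegalSeq V (toConfig η + (k : ℤ) • Pi.single x 1) l (toConfig (φ^[k] η)) := by
  induction k with
  | zero => exact ⟨hη, [], by simp [LegalSeq]⟩
  | succ k ih =>
    obtain ⟨hk, l, hl⟩ := ih
    obtain ⟨hk', l', hl'⟩ := hφ _ hk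
    rw [Function.iterate_succ_apply']
    refine ⟨hk', l ++ l', ?_⟩
    rw [addGrain_eq_add] at hl'
    rw [Nat.cast_succ, add_smul, one_smul, ← add_assoc]
    exact (hl.add_right (Pi.single_nonneg.2 zero_le_one)).append_s4 hl'

/-- By pigeonhole some orbit of `φ` closes up; `m` counts the topplings along that cycle. -/
theorem exists_lapVecMul_eq (hφ : IsAdditionOperator V x φ) {η₀ : {z // z ∈ V} → Fin (2 * d)}
    (h₀ : RecurrentOn V η₀) :
    ∃ k : ℕ, ∃ m : Site d → ℤ, 0 ≤ m ∧ lapVecMul V m = ((k + 1 : ℕ) : ℤ) • Pi.single x 1 := by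
  obtain ⟨i, j, hij, heq⟩ := Finite.exists_ne_map_eq_of_infinite fun n => φ^[n] η₀
  wlog hlt : i < j generalizing i j
  · exact this j i hij.symm heq.symm (hij.lt_or_gt.resolve_left hlt)
  obtain ⟨k, rfl⟩ := Nat.exists_eq_add_of_lt hlt
  obtain ⟨-, l, hl⟩ := hφ.iterate (hφ.iterate h₀ i).1 (k + 1)
  rw [← Function.iterate_add_apply, show k + 1 + i = i + k + 1 by omega, ← heq] at hl
  refine ⟨k, fun w => l.count w, fun w => Nat.cast_nonneg _, ?_⟩
  have := hl.eq_sub_lapVecMul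
  rw [add_sub_assoc, left_eq_add, sub_eq_zero] at this
  exact this.symm

theorem exists_iterate_eq_self (hφ : IsAdditionOperator V x φ)
    {η₀ : {z // z ∈ V} → Fin (2 * d)} (h₀ : RecurrentOn V η₀) :
    ∃ k, ∀ η, RecurrentOn V η → φ^[k + 1] η = η := by
  obtain ⟨k, m, hm, hΔm⟩ := hφ.exists_lapVecMul_eq h₀
  refine ⟨k, fun η hη => toConfig_injective ?_⟩
  obtain ⟨-, l, hl⟩ := hφ.iterate hη (k + 1)
  have hback : toConfig η + ((k + 1 : ℕ) : ℤ) • Pi.single x 1 - lapVecMul V m = toConfig η := by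
    rw [hΔm, add_sub_cancel_right]
  -- Least action: the stabilization topples no more than `m`; the excess `u` must vanish.
  have hcount := hl.count_le hm (by rw [hback]; exact stable_toConfig η)
  set u := m - fun w => (l.count w : ℤ)
  have hend : toConfig (φ^[k + 1] η) = toConfig η + lapVecMul V u := by
    rw [hl.eq_sub_lapVecMul, map_sub, hΔm]
    abel
  have hu := ((recurrentOn_iff_allowed η).1 hη).eq_zero_of_stable_add
    (fun w _ => sub_nonneg.2 (hcount w)) (hend ▸ stable_toConfig _)
  rw [hend, lapVecMul_eq_zero (n := u) hu, add_zero]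

theorem sum_comp {M : Type*} [AddCommMonoid M] (hφ : IsAdditionOperator V x φ)
    (f : ({z // z ∈ V} → Fin (2 * d)) → M) :
    ∑ η ∈ univ.filter (RecurrentOn V), f (φ η) = ∑ η ∈ univ.filter (RecurrentOn V), f η := by
  rcases (univ.filter (RecurrentOn V)).eq_empty_or_nonempty with hR | ⟨η₀, hη₀⟩
  · simp [hR]
  obtain ⟨k, hk⟩ := hφ.exists_iterate_eq_self (mem_filter.1 hη₀).2
  refine sum_nbij' φ φ^[k] (fun η hη => ?_) (fun η hη => ?_) (fun η hη => ?_) (fun η hη => ?_)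
    fun _ _ => rfl
  all_goals simp only [mem_filter, mem_univ, true_and] at hη ⊢
  · exact (hφ η hη).1
  · exact (hφ.iterate hη k).1
  · rw [← Function.iterate_succ_apply, hk η hη]
  · rw [← Function.iterate_succ_apply' φ, hk η hη]

end IsAdditionOperator

end AdditionOperator

theorem exists_recurrentOn_toConfig_eq {d : ℕ} {V : Finset (Site d)} {x : Site d} (hx : x ∈ V)
    {η : {z // z ∈ V} → Fin (2 * d)} (hη : RecurrentOn V η) {l : List (Site d)} {ξ : Config d}
    (hl : LegalSeq V (addGrain x (toConfig η)) l ξ) (hξ : Stable V ξ) :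
    ∃ η', RecurrentOn V η' ∧ toConfig η' = ξ := by
  have hallowed : Allowed V ξ := hl.allowed <| ((recurrentOn_iff_allowed η).1 hη).mono <| by
    rw [addGrain_eq_add]
    exact le_add_of_nonneg_right (Pi.single_nonneg.2 zero_le_one)
  have hout : ∀ z ∉ V, ξ z = 0 := fun z hz => by
    have hzx : z ≠ x := by rintro rfl; exact hz hx
    rw [hl.eq_sub_lapVecMul, addGrain_eq_add]
    simp [toConfig_of_notMem _ hz, lapVecMul_apply_of_notMem hz, hzx]
  obtain ⟨η', hη'⟩ := exists_toConfig_eq (ξ := ξ) (fun z hz => hallowed.one_le hz) hξ hout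
  exact ⟨η', (recurrentOn_iff_allowed η').2 (hη' ▸ hallowed), hη'⟩

theorem lapVecMul_sum_counts {d : ℕ} {V : Finset (Site d)} {x : Site d} (hx : x ∈ V)
    {N : ({z // z ∈ V} → Fin (2 * d)) → Site d → ℕ}
    (hN : ∀ η, RecurrentOn V η → ∃ (l : List (Site d)) (ξ : Config d),
        LegalSeq V (addGrain x (toConfig η)) l ξ ∧ Stable V ξ ∧ ∀ z, N η z = l.count z) :
    lapVecMul V (fun w => ∑ η ∈ univ.filter (RecurrentOn V), (N η w : ℤ)) =
      (#(univ.filter (RecurrentOn V)) : ℤ) • Pi.single x 1 := by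
  have hstep : ∀ η, ∃ η', RecurrentOn V η → RecurrentOn V η' ∧
      ∃ l, LegalSeq V (addGrain x (toConfig η)) l (toConfig η') ∧ ∀ z, N η z = l.count z := by
    intro η
    by_cases hη : RecurrentOn V η
    · obtain ⟨l, ξ, hl, hξ, hNl⟩ := hN η hη
      obtain ⟨η', hη', rfl⟩ := exists_recurrentOn_toConfig_eq hx hη hl hξ
      exact ⟨η', fun _ => ⟨hη', l, hl, hNl⟩⟩
    · exact ⟨η, fun h => absurd h hη⟩
  choose φ hφ using hstep
  have hadd : IsAdditionOperator V x φ := fun η hη =>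
    ⟨(hφ η hη).1, (hφ η hη).2.imp fun _ h => h.1⟩
  have hone : ∀ η ∈ univ.filter (RecurrentOn V), toConfig (φ η) =
      toConfig η + Pi.single x 1 - lapVecMul V (fun w => (N η w : ℤ)) := fun η hη => by
    obtain ⟨-, l, hl, hNl⟩ := hφ η (mem_filter.1 hη).2
    simp only [hl.eq_sub_lapVecMul, addGrain_eq_add, hNl]
  have hsum := hadd.sum_comp toConfig
  rw [sum_congr rfl hone, sum_sub_distrib, sum_add_distrib, sum_const, ← map_sum,
    sub_eq_iff_eq_add] at hsum
  have hfn : (fun w => ∑ η ∈ univ.filter (RecurrentOn V), (N η w : ℤ)) =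
      ∑ η ∈ univ.filter (RecurrentOn V), fun w => (N η w : ℤ) := by
    ext
    simp
  rw [hfn, natCast_zsmul]
  exact (add_left_cancel hsum).symm

theorem inv_apply_eq_div_of_vecMul_eq_single {n K : Type*} [Fintype n] [DecidableEq n] [Field K]
    {M : Matrix n n K} (hM : M.det ≠ 0) {v : n → K} {a : n} {c : K} (hc : c ≠ 0)
    (h : v ᵥ* M = Pi.single a c) (b : n) : M⁻¹ a b = v b / c := by
  have hv : v = c • M⁻¹.row a := by
    rw [← Matrix.single_vecMul, ← h, Matrix.vecMul_vecMul,
      Matrix.mul_nonsing_inv _ (isUnit_iff_ne_zero.2 hM), Matrix.vecMul_one]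
  rw [hv]
  field_simp
  simp [mul_comm]

theorem vecMul_lapMatR {d : ℕ} {V : Finset (Site d)} (n : Site d → ℤ) :
    (fun b : {x // x ∈ V} => (n b : ℝ)) ᵥ* lapMatR V = fun a => (lapVecMul V n a.1 : ℝ) := by
  funext a
  rw [lapVecMul_apply_of_mem a.2, ← sum_coe_sort V]
  simp [Matrix.vecMul, dotProduct, lapMatR, lap_comm, mul_comm]

/-- Dhar's formula: the expectation, under the uniform measure on recurrent
configurations of `V`, of the number `N_V(x,y,·)` of topplings at `y` upon addition of a
grain at `x` followed by stabilization, equals `(Δ_V⁻¹)_{xy}`. -/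
theorem dhar_formula {d : ℕ} (V : Finset (Site d))
    (x y : Site d) (hx : x ∈ V) (hy : y ∈ V)
    (N : ({z // z ∈ V} → Fin (2 * d)) → Site d → ℕ)
    (hN : ∀ η, RecurrentOn V η → ∃ (l : List (Site d)) (ξ : Config d),
        LegalSeq V (addGrain x (toConfig η)) l ξ ∧ Stable V ξ ∧ ∀ z, N η z = l.count z) :
    (∑ η ∈ Finset.univ.filter (RecurrentOn V), (N η y : ℝ))
        / (Finset.univ.filter (RecurrentOn V)).card
      = (lapMatR V)⁻¹ ⟨x, hx⟩ ⟨y, hy⟩ := by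
  rcases Nat.eq_zero_or_pos d with rfl | hd
  · have : IsEmpty ({z // z ∈ V} → Fin (2 * 0)) := ⟨fun η => (η ⟨x, hx⟩).elim0⟩
    have hM : lapMatR V = 0 := by
      ext a b
      simp [lapMatR, lap, Subsingleton.elim a.1 b.1]
    simp [hM]
  set R := univ.filter (RecurrentOn V)
  have hR : (#R : ℝ) ≠ 0 := by
    obtain ⟨η, hη⟩ := exists_recurrentOn ⟨0, hd⟩ V
    exact Nat.cast_ne_zero.2 (card_ne_zero_of_mem (mem_filter.2 ⟨mem_univ η, hη⟩))
  refine (inv_apply_eq_div_of_vecMul_eq_single (lapMatR_det_ne_zero ⟨0, hd⟩ V) hR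
    (v := fun b => ∑ η ∈ R, (N η b : ℝ)) ?_ ⟨y, hy⟩).symm
  have := vecMul_lapMatR (V := V) fun w => ∑ η ∈ R, (N η w : ℤ)
  push_cast at this
  rw [this, lapVecMul_sum_counts hx hN]
  funext a
  simp [R, Pi.single_apply, Subtype.ext_iff]
end
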